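/- arXiv:2311.15321 — 2 statements merged into one kernel-verified Lean document; each statement's English description precedes it below -/
import Mathlib

section
/- Let Γ be a signed graph with a non-negative unit eigenvector x for its largest eigenvalue λ₁(Γ). If Γ′ is obtained from Γ by deleting some negative edges, then λ₁(Γ′) ≥ λ₁(Γ), with equality only if x vanishes at every endpoint of every deleted edge. -/
/-!
Since `x` is a unit eigenvector, `λ₁(Γ) = xᵀ A x`. Deleting negative edges only raises entries
of `A`, so for `x ≥ 0` we get `xᵀ A x ≤ xᵀ A′ x ≤ λ₁(Γ′)`, the last step because
`λ₁(Γ′) I - A′` is positive semidefinite. In the equality case `xᵀ (λ₁(Γ′) I - A′) x = 0`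
forces `A′ x = λ₁ x = A x`; row `u` of `(A′ - A) x = 0` is a sum of non-negative terms, one of
which is `x_v` for each deleted edge `uv`.
-/

/-- The largest eigenvalue (index) of a real symmetric matrix. -/
noncomputable def lam1 {n : ℕ} (A : Matrix (Fin n) (Fin n) ℝ) (hA : A.IsHermitian) : ℝ :=
  ⨆ i, hA.eigenvalues i

open Matrix
open scoped MatrixOrder

namespace Matrix.IsHermitian

variable {n : Type*} [Fintype n] [DecidableEq n] {A : Matrix n n ℝ}

theorem posSemidef_smul_one_sub (hA : A.IsHermitian) {μ : ℝ} (h : ∀ i, hA.eigenvalues i ≤ μ) :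
    (μ • 1 - A).PosSemidef := by
  have : A ≤ algebraMap ℝ _ μ := le_algebraMap_of_spectrum_le (by
    rw [hA.spectrum_real_eq_range_eigenvalues]
    rintro _ ⟨i, rfl⟩
    exact h i) hA.isSelfAdjoint
  simpa [le_iff, Algebra.algebraMap_eq_smul_one] using this

theorem dotProduct_mulVec_le (hA : A.IsHermitian) {μ : ℝ} (h : ∀ i, hA.eigenvalues i ≤ μ)
    (v : n → ℝ) : v ⬝ᵥ A *ᵥ v ≤ μ * (v ⬝ᵥ v) := by
  have := (hA.posSemidef_smul_one_sub h).dotProduct_mulVec_nonneg v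
  simpa [sub_mulVec, smul_mulVec, dotProduct_sub] using this

theorem mulVec_eq_smul_of_dotProduct_mulVec_eq (hA : A.IsHermitian) {μ : ℝ}
    (h : ∀ i, hA.eigenvalues i ≤ μ) {v : n → ℝ} (hv : v ⬝ᵥ A *ᵥ v = μ * (v ⬝ᵥ v)) :
    A *ᵥ v = μ • v := by
  have := ((hA.posSemidef_smul_one_sub h).dotProduct_mulVec_zero_iff v).1 (by
    simp [sub_mulVec, smul_mulVec, dotProduct_sub, hv])
  simpa [sub_mulVec, smul_mulVec, sub_eq_zero, eq_comm] using this

end Matrix.IsHermitian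

namespace Matrix

variable {n R : Type*} [Fintype n] [CommRing R] [LinearOrder R] [IsStrictOrderedRing R]
  {A A' : Matrix n n R} {x : n → R}

theorem mulVec_le_mulVec_of_le (hAA' : ∀ i j, A i j ≤ A' i j) (hx : 0 ≤ x) :
    A *ᵥ x ≤ A' *ᵥ x :=
  fun i => Finset.sum_le_sum fun j _ => mul_le_mul_of_nonneg_right (hAA' i j) (hx j)

theorem eq_zero_of_mulVec_eq_of_le (hAA' : ∀ i j, A i j ≤ A' i j) (hx : 0 ≤ x)
    (heq : A *ᵥ x = A' *ᵥ x) {i j : n} (hij : A i j ≠ A' i j) : x j = 0 := by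
  have hsum : ∑ k, (A' i k - A i k) * x k = 0 := by
    simpa [sub_mul, Finset.sum_sub_distrib, mulVec, dotProduct, sub_eq_zero]
      using (congrFun heq i).symm
  have hterm := (Finset.sum_eq_zero_iff_of_nonneg fun k _ =>
    mul_nonneg (sub_nonneg.2 (hAA' i k)) (hx k)).1 hsum j (Finset.mem_univ j)
  exact (mul_eq_zero.1 hterm).resolve_left (sub_ne_zero.2 hij.symm)

end Matrix

theorem eigenvalues_le_lam1 {n : ℕ} {A : Matrix (Fin n) (Fin n) ℝ} (hA : A.IsHermitian)
    (i : Fin n) : hA.eigenvalues i ≤ lam1 A hA :=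
  le_ciSup (Set.finite_range _).bddAbove i

theorem stmt7_general {n : ℕ} (A A' : Matrix (Fin n) (Fin n) ℝ)
    (hA : A.IsHermitian) (hA' : A'.IsHermitian)
    (hchange : ∀ i j, A' i j = A i j ∨ (A i j = -1 ∧ A' i j = 0))
    (x : Fin n → ℝ) (hx : ∀ i, 0 ≤ x i) (hunit : ∑ i, x i ^ 2 = 1)
    (heig : A.mulVec x = lam1 A hA • x) :
    lam1 A hA ≤ lam1 A' hA' ∧
      (lam1 A' hA' = lam1 A hA → ∀ i j, A' i j ≠ A i j → x i = 0 ∧ x j = 0) := by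
  have hle : ∀ i j, A i j ≤ A' i j := fun i j => by
    rcases hchange i j with h | ⟨h, h'⟩ <;> linarith
  have hxx : x ⬝ᵥ x = 1 := by simpa [dotProduct, sq] using hunit
  have hAx : x ⬝ᵥ A *ᵥ x = lam1 A hA := by rw [heig, dotProduct_smul, hxx, smul_eq_mul, mul_one]
  have hmono : x ⬝ᵥ A *ᵥ x ≤ x ⬝ᵥ A' *ᵥ x :=
    dotProduct_le_dotProduct_of_nonneg_left (mulVec_le_mulVec_of_le hle hx) hx
  have hA'x : x ⬝ᵥ A' *ᵥ x ≤ lam1 A' hA' := by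
    simpa [hxx] using hA'.dotProduct_mulVec_le (eigenvalues_le_lam1 hA') x
  refine ⟨by linarith, fun heq i j hij => ?_⟩
  have hA'eig : A' *ᵥ x = lam1 A' hA' • x :=
    hA'.mulVec_eq_smul_of_dotProduct_mulVec_eq (eigenvalues_le_lam1 hA')
      (by rw [hxx, mul_one]; linarith)
  have hsame : A *ᵥ x = A' *ᵥ x := by rw [heig, hA'eig, heq]
  have hji : A j i ≠ A' j i := by
    simpa [← hA.apply i j, ← hA'.apply i j] using hij.symm
  exact ⟨eq_zero_of_mulVec_eq_of_le hle hx hsame hji,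
    eq_zero_of_mulVec_eq_of_le hle hx hsame hij.symm⟩

/-- Let `Γ` (adjacency matrix `A`) have a non-negative unit eigenvector `x` for `λ₁(Γ)`.
If `Γ′` (adjacency matrix `A′`) is obtained from `Γ` by deleting some negative
edges (changing entries `−1` to `0`), then `λ₁(Γ′) ≥ λ₁(Γ)`, with equality only if `x`
vanishes at both endpoints of every deleted edge. -/
theorem stmt7 {n : ℕ} (A A' : Matrix (Fin n) (Fin n) ℝ)
    (hA : A.IsHermitian) (hA' : A'.IsHermitian)
    (hdiag : ∀ i, A i i = 0)
    (hent : ∀ i j, A i j = -1 ∨ A i j = 0 ∨ A i j = 1)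
    (hchange : ∀ i j, A' i j = A i j ∨ (A i j = -1 ∧ A' i j = 0))
    (x : Fin n → ℝ) (hx : ∀ i, 0 ≤ x i) (hunit : ∑ i, x i ^ 2 = 1)
    (heig : A.mulVec x = lam1 A hA • x) :
    lam1 A hA ≤ lam1 A' hA' ∧
      (lam1 A' hA' = lam1 A hA → ∀ i j, A' i j ≠ A i j → x i = 0 ∧ x j = 0) :=
  stmt7_general A A' hA hA' hchange x hx hunit heig
end

section
/- Let Γ be a signed graph on n vertices containing a negative cycle C of length r − 1 (r ≥ 6) having exactly one negative edge v₁v₂, and suppose Γ contains no negative cycle of length r. Then every vertex outside C is non-adjacent to at least one of each pair of consecutive cycle vertices other than the pair {v₁, v₂}; consequently each vertex outside C has at most ⌈(r−1)/2⌉ neighbors on C, and hence the number of edges between V(C) and its complement is at most ⌈(r−1)/2⌉·(n − r + 1). -/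
/-!
If a vertex `w` off `C` were adjacent to `c k` and `c (k + 1)` with `k ≠ 0`, replacing the edge
`c k c (k + 1)` of `C` by the path `c k, w, c (k + 1)` would give a cycle of length `r`. Its two new
edges are positive, since `c 0 c 1` is the only negative edge of `Γ`, and it still contains
`c 0 c 1`: a negative `r`-cycle. So, reading `C` as the path `c 1, c 2, …, c (r - 2), c 0` cut at
its negative edge, the neighbours of `w` on `C` contain no two consecutive vertices of this path,
hence there are at most `⌈(r - 1) / 2⌉ = r / 2` of them. Summing over the `n - r + 1` vertices off
`C` bounds the number of edges leaving `C`.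
-/

/-- The sign of a walk in a signed graph: the product of the edge signs along the walk. -/
def walkSign {V : Type*} {G : SimpleGraph V} (σ : V → V → ℝ) {u v : V} (p : G.Walk u v) : ℝ :=
  (p.darts.map fun d => σ d.toProd.1 d.toProd.2).prod

open SimpleGraph Finset

section WalkSign

variable {V : Type*} {G : SimpleGraph V} (σ : V → V → ℝ)

@[simp]
lemma walkSign_cons {u v x : V} (h : G.Adj u v) (p : G.Walk v x) :
    walkSign σ (Walk.cons h p) = σ u v * walkSign σ p := by
  simp [walkSign]

@[simp]
lemma walkSign_concat {u v x : V} (p : G.Walk u v) (h : G.Adj v x) :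
    walkSign σ (p.concat h) = walkSign σ p * σ v x := by
  simp [walkSign, Walk.darts_concat]

@[simp]
lemma walkSign_copy {u v u' v' : V} (p : G.Walk u v) (hu : u = u') (hv : v = v') :
    walkSign σ (p.copy hu hv) = walkSign σ p := by
  subst hu hv
  rfl

end WalkSign

section CyclicArc

variable {V : Type*} {G : SimpleGraph V} {m : ℕ} (c : ZMod m → V)
  (hc : ∀ k, G.Adj (c k) (c (k + 1)))

def cyclicArc (j : ZMod m) : (s : ℕ) → G.Walk (c j) (c (j + s))
  | 0 => Walk.nil.copy rfl (by simp)
  | s + 1 => ((cyclicArc j s).concat (hc (j + s))).copy rfl (by push_cast; ring_nf)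

@[simp]
lemma length_cyclicArc (j : ZMod m) (s : ℕ) : (cyclicArc c hc j s).length = s := by
  induction s with
  | zero => simp [cyclicArc]
  | succ s ih => simp [cyclicArc, ih]

lemma support_cyclicArc (j : ZMod m) (s : ℕ) :
    (cyclicArc c hc j s).support = (List.range (s + 1)).map fun i : ℕ => c (j + i) := by
  induction s with
  | zero => simp [cyclicArc]
  | succ s ih => simp [cyclicArc, ih, List.range_succ (n := s + 1), add_assoc]

lemma walkSign_cyclicArc (σ : V → V → ℝ) (j : ZMod m) (s : ℕ) :
    walkSign σ (cyclicArc c hc j s) = ∏ i ∈ range s, σ (c (j + i)) (c (j + i + 1)) := by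
  induction s with
  | zero => simp [cyclicArc, walkSign]
  | succ s ih => simp [cyclicArc, ih, prod_range_succ, add_assoc]

lemma isPath_cyclicArc (hinj : Function.Injective c) (j : ZMod m) {s : ℕ} (hs : s < m) :
    (cyclicArc c hc j s).IsPath := by
  rw [Walk.isPath_def, support_cyclicArc]
  refine List.nodup_range.map_on fun a ha b hb hab => ?_
  have hab' : (a : ZMod m) = b := add_left_cancel (hinj hab)
  rw [List.mem_range] at ha hb
  rwa [ZMod.natCast_eq_natCast_iff', Nat.mod_eq_of_lt (by omega), Nat.mod_eq_of_lt (by omega)]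
    at hab'

end CyclicArc

lemma exists_isCycle_through_of_adj_consecutive {V : Type*} {G : SimpleGraph V} {m : ℕ}
    (hm : 2 ≤ m) (σ : V → V → ℝ) (c : ZMod m → V) (hinj : Function.Injective c)
    (hc : ∀ k, G.Adj (c k) (c (k + 1))) {w : V} (hw : w ∉ Set.range c) {k : ZMod m}
    (hk : G.Adj w (c (k + 1))) (hk' : G.Adj (c k) w) :
    ∃ p : G.Walk w w, p.IsCycle ∧ p.length = m + 1 ∧
      walkSign σ p = σ w (c (k + 1)) *
        (∏ i ∈ range (m - 1), σ (c (k + 1 + i)) (c (k + 1 + i + 1))) * σ (c k) w := by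
  have hend : k + 1 + ((m - 1 : ℕ) : ZMod m) = k := by
    rw [Nat.cast_sub (by omega : 1 ≤ m), ZMod.natCast_self]; ring
  set arc := (cyclicArc c hc (k + 1) (m - 1)).copy rfl (congrArg c hend)
  have hw_arc : w ∉ arc.support := by
    simp only [arc, Walk.support_copy, support_cyclicArc, List.mem_map, not_exists, not_and]
    exact fun i _ hi => hw ⟨_, hi⟩
  have hpath : (arc.concat hk').IsPath :=
    ((Walk.isPath_copy _ _ _).2 (isPath_cyclicArc c hc hinj _ (by omega))).concat hw_arc hk'
  have hedge : s(w, c (k + 1)) ∉ (arc.concat hk').edges := by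
    rw [Walk.edges_concat, List.concat_eq_append, List.mem_append, List.mem_singleton,
      not_or, Sym2.eq_iff]
    refine ⟨fun h => hw_arc (arc.fst_mem_support_of_mem_edges h), ?_⟩
    rintro (⟨h, -⟩ | ⟨-, h⟩)
    · exact hw ⟨k, h.symm⟩
    · have h1 : (1 : ZMod m) = 0 := by simpa using hinj h
      have := Nat.le_of_dvd one_pos ((ZMod.natCast_eq_zero_iff 1 m).1 (by exact_mod_cast h1))
      omega
  refine ⟨.cons hk (arc.concat hk'), (Walk.cons_isCycle_iff _ hk).2 ⟨hpath, hedge⟩, ?_, ?_⟩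
  · simp only [Walk.length_cons, Walk.length_concat, Walk.length_copy, length_cyclicArc, arc]
    omega
  · simp [arc, walkSign_cyclicArc, mul_assoc]

lemma prod_range_sub_one_eq_apply_zero {m : ℕ} [NeZero m] (τ : ZMod m → ℝ)
    (hτ : ∀ j ≠ 0, τ j = 1) {k : ZMod m} (hk : k ≠ 0) :
    ∏ i ∈ range (m - 1), τ (k + 1 + i) = τ 0 := by
  set i₀ := (-(k + 1)).val
  have hi₀ : k + 1 + (i₀ : ZMod m) = 0 := by simp [i₀]
  have hi₀_mem : i₀ ∈ range (m - 1) := by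
    have hlt : i₀ < m := ZMod.val_lt _
    refine mem_range.2 (lt_of_le_of_ne (by omega) fun h => hk ?_)
    rw [h, Nat.cast_sub NeZero.one_le, ZMod.natCast_self] at hi₀
    linear_combination hi₀
  rw [prod_eq_single_of_mem i₀ hi₀_mem fun i hi hne => hτ _ fun h => hne ?_, hi₀]
  have : (i : ZMod m) = i₀ := by linear_combination h - hi₀
  rw [ZMod.natCast_eq_natCast_iff', Nat.mod_eq_of_lt (by simp at hi; omega),
    Nat.mod_eq_of_lt (ZMod.val_lt _)] at this
  exact this

lemma Finset.card_le_succ_div_two_of_succ_notMem {s : Finset ℕ} {L : ℕ} (hs : s ⊆ range L)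
    (h : ∀ a ∈ s, a + 1 ∉ s) : #s ≤ (L + 1) / 2 := by
  have hinj : Set.InjOn (· / 2) (s : Set ℕ) := by
    intro a ha b hb hab
    simp only at hab
    by_contra hne
    rcases lt_or_gt_of_ne hne with hlt | hlt
    · exact h a ha (by rwa [show a + 1 = b by omega])
    · exact h b hb (by rwa [show b + 1 = a by omega])
  calc #s = #(s.image (· / 2)) := (card_image_of_injOn hinj).symm
    _ ≤ #(range ((L + 1) / 2)) := card_le_card fun x hx => by
      obtain ⟨a, ha, rfl⟩ := mem_image.1 hx
      have := mem_range.1 (hs ha)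
      exact mem_range.2 (by omega)
    _ = (L + 1) / 2 := card_range _

lemma ZMod.card_le_succ_div_two_of_succ_mem_imp_eq_zero {m : ℕ} [NeZero m] (s : Finset (ZMod m))
    (h : ∀ x ∈ s, x + 1 ∈ s → x = 0) : #s ≤ (m + 1) / 2 := by
  -- `x ↦ (x - 1).val` orders `ZMod m` as `1, 2, …, m - 1, 0`, so the pair `0, 1` is not adjacent.
  have hinj : Set.InjOn (fun x : ZMod m => (x - 1).val) (s : Set (ZMod m)) :=
    fun x _ y _ hxy => sub_left_injective (ZMod.val_injective m hxy)
  rw [← card_image_of_injOn hinj]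
  refine card_le_succ_div_two_of_succ_notMem (fun a ha => ?_) fun a ha ha' => ?_
  · obtain ⟨x, -, rfl⟩ := mem_image.1 ha
    exact mem_range.2 (ZMod.val_lt _)
  obtain ⟨x, hx, rfl⟩ := mem_image.1 ha
  obtain ⟨y, hy, hxy⟩ := mem_image.1 ha'
  have hcast : (((x - 1).val + 1 : ℕ) : ZMod m) = x := by simp
  have hyx : y = x + 1 := by
    have := congrArg (fun n : ℕ => (n : ZMod m)) hxy
    simp only [ZMod.natCast_zmod_val, hcast] at this
    linear_combination this
  have hx0 : x = 0 := h x hx (hyx ▸ hy)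
  have hlt : (x - 1).val + 1 < m := hxy ▸ ZMod.val_lt _
  have := congrArg ZMod.val hcast
  rw [ZMod.val_cast_of_lt hlt, hx0, ZMod.val_zero] at this
  omega

lemma eq_zero_of_pair_eq_pair_zero_one {V : Type*} {m : ℕ} (hm : 3 ≤ m) {c : ZMod m → V}
    (hinj : Function.Injective c) {j : ZMod m}
    (h : ({c j, c (j + 1)} : Set V) = {c 0, c 1}) : j = 0 := by
  rcases Set.pair_eq_pair_iff.1 h with ⟨h0, -⟩ | ⟨h1, h2⟩
  · exact hinj h0
  · obtain rfl := hinj h1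
    have : ((2 : ℕ) : ZMod m) = 0 := by
      rw [← hinj h2]; norm_num
    have := Nat.le_of_dvd two_pos ((ZMod.natCast_eq_zero_iff 2 m).1 this)
    omega

lemma pair_ne_of_notMem_range {V ι : Type*} {c : ι → V} {w : V} (hw : w ∉ Set.range c)
    (x : V) (i j : ι) : ({w, x} : Set V) ≠ {c i, c j} := fun h => by
  rcases (h ▸ Set.mem_insert w {x} : w ∈ ({c i, c j} : Set V)) with h | h
  exacts [hw ⟨i, h.symm⟩, hw ⟨j, h.symm⟩]

lemma card_filter_notMem_range_le_mul {V ι : Type*} [Fintype V] [DecidableEq V] [Fintype ι]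
    {c : ι → V} (hinj : Function.Injective c) (R : V → ι → Prop) [∀ v k, Decidable (R v k)]
    (b : ℕ) (hb : ∀ w, w ∉ Set.range c → #{k | R w k} ≤ b) :
    #{p : V × ι | (∀ k, p.1 ≠ c k) ∧ R p.1 p.2} ≤ b * (Fintype.card V - Fintype.card ι) := by
  classical
  have hout : #{v : V | ∀ k, v ≠ c k} = Fintype.card V - Fintype.card ι := by
    have : ({v : V | ∀ k, v ≠ c k} : Finset V) = (univ.image c)ᶜ := by
      ext v; simp [eq_comm]
    rw [this, card_compl, card_image_of_injective _ hinj, card_univ]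
  rw [← hout]
  refine card_le_mul_card_image_of_maps_to (f := Prod.fst) (fun p hp => ?_) b fun v hv => ?_
  · simp only [mem_filter, mem_univ, true_and] at hp ⊢
    exact hp.1
  · simp only [mem_filter, mem_univ, true_and] at hv
    refine (card_le_card_of_injOn Prod.snd (fun p hp => ?_) fun p hp q hq hpq => ?_).trans
      (hb v fun ⟨k, hk⟩ => hv k hk.symm)
    · simp only [mem_coe, mem_filter, mem_univ, true_and] at hp ⊢
      exact hp.2 ▸ hp.1.2
    · simp only [mem_coe, mem_filter, mem_univ, true_and] at hp hq
      exact Prod.ext (hp.2.trans hq.2.symm) hpq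

theorem stmt16_general {n r : ℕ} (hr : 6 ≤ r) [NeZero (r - 1)]
    (G : SimpleGraph (Fin n)) [DecidableRel G.Adj]
    (σ : Fin n → Fin n → ℝ)
    (hval : ∀ i j, G.Adj i j → σ i j = 1 ∨ σ i j = -1)
    (c : ZMod (r - 1) → Fin n) (hinj : Function.Injective c)
    (hcyc : ∀ k, G.Adj (c k) (c (k + 1)))
    (hneg : σ (c 0) (c 1) = -1)
    (huniq : ∀ i j, G.Adj i j → σ i j = -1 → ({i, j} : Set (Fin n)) = {c 0, c 1})
    (hno : ¬ ∃ (v : Fin n) (p : G.Walk v v), p.IsCycle ∧ p.length = r ∧ walkSign σ p = -1) :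
    (∀ w, w ∉ Set.range c → ∀ k, ({c k, c (k + 1)} : Set (Fin n)) ≠ {c 0, c 1} →
        ¬(G.Adj w (c k) ∧ G.Adj w (c (k + 1)))) ∧
    (∀ w, w ∉ Set.range c →
        (Finset.univ.filter fun k : ZMod (r - 1) => G.Adj w (c k)).card ≤ r / 2) ∧
    (Finset.univ.filter fun p : Fin n × ZMod (r - 1) =>
        (∀ k, p.1 ≠ c k) ∧ G.Adj p.1 (c p.2)).card ≤ r / 2 * (n + 1 - r) := by
  have hpos : ∀ i j, G.Adj i j → ({i, j} : Set (Fin n)) ≠ {c 0, c 1} → σ i j = 1 :=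
    fun i j hij hne => (hval i j hij).resolve_right (hne ∘ huniq i j hij)
  have hzero : ∀ k, ({c k, c (k + 1)} : Set (Fin n)) = {c 0, c 1} → k = 0 :=
    fun k => eq_zero_of_pair_eq_pair_zero_one (by omega) hinj
  have hnot_both : ∀ w, w ∉ Set.range c → ∀ k, ({c k, c (k + 1)} : Set (Fin n)) ≠ {c 0, c 1} →
      ¬(G.Adj w (c k) ∧ G.Adj w (c (k + 1))) := by
    rintro w hw k hk ⟨hwk, hwk'⟩
    have hk0 : k ≠ 0 := by rintro rfl; simp at hk
    obtain ⟨p, hp, hlen, hsign⟩ :=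
      exists_isCycle_through_of_adj_consecutive (by omega) σ c hinj hcyc hw hwk' hwk.symm
    have harc := prod_range_sub_one_eq_apply_zero (fun j => σ (c j) (c (j + 1)))
      (fun j hj => hpos _ _ (hcyc j) (hj ∘ hzero j)) hk0
    refine hno ⟨w, p, hp, by omega, ?_⟩
    rw [hsign, harc, hpos _ _ hwk' (pair_ne_of_notMem_range hw _ _ _),
      hpos _ _ hwk.symm (Set.pair_comm _ _ ▸ pair_ne_of_notMem_range hw _ _ _), zero_add, hneg]
    norm_num
  have hdeg : ∀ w, w ∉ Set.range c →
      (Finset.univ.filter fun k : ZMod (r - 1) => G.Adj w (c k)).card ≤ r / 2 := by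
    intro w hw
    have := ZMod.card_le_succ_div_two_of_succ_mem_imp_eq_zero {k | G.Adj w (c k)}
      fun k hk hk' => by_contra fun h0 => by
      simp only [mem_filter, mem_univ, true_and] at hk hk'
      exact hnot_both w hw k (h0 ∘ hzero k) ⟨hk, hk'⟩
    rwa [Nat.sub_add_cancel (by omega)] at this
  refine ⟨hnot_both, hdeg, ?_⟩
  have := card_filter_notMem_range_le_mul hinj (fun v k => G.Adj v (c k)) _ hdeg
  rwa [Fintype.card_fin, ZMod.card, show n - (r - 1) = n + 1 - r by omega] at this

/-- Let `Γ` be a signed graph on `n` vertices containing a negative cycle `C` of length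
`r − 1` (with `r ≥ 6`), whose only negative edge is `v₁v₂ = (c 0)(c 1)`, and suppose `Γ`
contains no negative cycle of length `r`. Then: every vertex outside `C` is non-adjacent to
at least one of each pair of consecutive cycle vertices other than `{v₁, v₂}`; consequently
every vertex outside `C` has at most `⌈(r−1)/2⌉ = r/2` neighbours on `C`; and hence the number
of edges between `V(C)` and its complement is at most `⌈(r−1)/2⌉·(n − r + 1)`. -/
theorem stmt16 {n r : ℕ} (hr : 6 ≤ r) [NeZero (r - 1)]
    (G : SimpleGraph (Fin n)) [DecidableRel G.Adj]
    (σ : Fin n → Fin n → ℝ)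
    (hsym : ∀ i j, σ i j = σ j i)
    (hval : ∀ i j, G.Adj i j → σ i j = 1 ∨ σ i j = -1)
    (c : ZMod (r - 1) → Fin n) (hinj : Function.Injective c)
    (hcyc : ∀ k, G.Adj (c k) (c (k + 1)))
    (hneg : σ (c 0) (c 1) = -1)
    (huniq : ∀ i j, G.Adj i j → σ i j = -1 → ({i, j} : Set (Fin n)) = {c 0, c 1})
    (hno : ¬ ∃ (v : Fin n) (p : G.Walk v v), p.IsCycle ∧ p.length = r ∧ walkSign σ p = -1) :
    (∀ w, w ∉ Set.range c → ∀ k, ({c k, c (k + 1)} : Set (Fin n)) ≠ {c 0, c 1} →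
        ¬(G.Adj w (c k) ∧ G.Adj w (c (k + 1)))) ∧
    (∀ w, w ∉ Set.range c →
        (Finset.univ.filter fun k : ZMod (r - 1) => G.Adj w (c k)).card ≤ r / 2) ∧
    (Finset.univ.filter fun p : Fin n × ZMod (r - 1) =>
        (∀ k, p.1 ≠ c k) ∧ G.Adj p.1 (c p.2)).card ≤ r / 2 * (n + 1 - r) :=
  stmt16_general hr G σ hval c hinj hcyc hneg huniq hno
end
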